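/- Let (Ω, 𝒜, P) be a probability space and let b be an event with P(b) > 0. If g is an event with 0 < P(g) < 1 and P(g ∩ b) = P(b), then β_{g→b} = (1 − P(g))/(1 + P(g)). Consequently, if g₁ and g₂ are two events with 0 < P(g₁) < 1, 0 < P(g₂) < 1, P(g₁ ∩ b) = P(b) and P(g₂ ∩ b) = P(b), then P(g₁) < P(g₂) implies β_{g₁→b} > β_{g₂→b}; i.e., among genuine (backward-reachable) causes of b, β strictly decreases with the marginal probability of the cause, so the temporally closest cause maximizes β. -/
import Mathlib


open MeasureTheory

/-- The correlation correction factor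
`β_{u→v} = (P(u ∩ v) − P(u)·P(v))/(P(u ∩ v) + P(u)·P(v))`. -/
noncomputable def betaEst {Ω : Type*} [MeasurableSpace Ω] (P : Measure Ω)
    (u v : Set Ω) : ℝ :=
  ((P (u ∩ v)).toReal - (P u).toReal * (P v).toReal) /
    ((P (u ∩ v)).toReal + (P u).toReal * (P v).toReal)

/-- For genuine (backward-reachable) causes `g` of `b` (i.e. `P(g ∩ b) = P(b)`),
`β_{g→b} = (1 − P(g))/(1 + P(g))`; consequently `β` strictly decreases with the
marginal probability of the cause, so the temporally closest cause maximizes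
`β`. -/
theorem beta_genuine_causes
    {Ω : Type*} [MeasurableSpace Ω] (P : Measure Ω) [IsProbabilityMeasure P]
    (b : Set Ω) (hb : MeasurableSet b) (hb0 : 0 < (P b).toReal) :
    (∀ g : Set Ω, MeasurableSet g → 0 < (P g).toReal → (P g).toReal < 1 →
      (P (g ∩ b)).toReal = (P b).toReal →
      betaEst P g b = (1 - (P g).toReal) / (1 + (P g).toReal)) ∧
    (∀ g₁ g₂ : Set Ω, MeasurableSet g₁ → MeasurableSet g₂ →
      0 < (P g₁).toReal → (P g₁).toReal < 1 →
      0 < (P g₂).toReal → (P g₂).toReal < 1 →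
      (P (g₁ ∩ b)).toReal = (P b).toReal → (P (g₂ ∩ b)).toReal = (P b).toReal →
      (P g₁).toReal < (P g₂).toReal → betaEst P g₁ b > betaEst P g₂ b) := by
  have key : ∀ g : Set Ω, 0 < (P g).toReal → (P g).toReal < 1 →
      (P (g ∩ b)).toReal = (P b).toReal →
      betaEst P g b = (1 - (P g).toReal) / (1 + (P g).toReal) := by
    intro g hg0 hg1 hgb
    unfold betaEst
    rw [hgb]
    have hden : (1 + (P g).toReal) ≠ 0 := by positivity
    rw [show (P b).toReal - (P g).toReal * (P b).toReal
        = (P b).toReal * (1 - (P g).toReal) by ring,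
      show (P b).toReal + (P g).toReal * (P b).toReal
        = (P b).toReal * (1 + (P g).toReal) by ring,
      mul_div_mul_left _ _ (ne_of_gt hb0)]
  refine ⟨fun g _ h0 h1 hgb => key g h0 h1 hgb, ?_⟩
  intro g₁ g₂ _ _ h10 h11 h20 h21 hb1 hb2 hlt
  rw [key g₁ h10 h11 hb1, key g₂ h20 h21 hb2]
  rw [gt_iff_lt, div_lt_div_iff₀ (by positivity) (by positivity)]
  nlinarith
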